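/- arXiv:1305.3266 — 2 statements merged into one kernel-verified Lean document; each statement's English description precedes it below -/
import Mathlib

section
/- Maximum principle for problems with advanced argument: Let τ : [a,b] → [a,b+r] be measurable with τ(t) ≥ t for a.e. t ∈ [a,b], and let p : [a,b+r] → ℝ be continuous, with p restricted to [a,b] absolutely continuous, satisfying p'(t) ≥ K(t)p(t) − L(t)p(τ(t)) for a.e. t ∈ [a,b] and p(t) = 0 for all t ∈ [b,b+r], where K, L ∈ L¹([a,b]) and L ≥ 0 a.e. If ∫_a^b (K₋(t) + L(t)) dt < 1, where K₋ = max{−K, 0}, then p(t) ≤ 0 for all t ∈ [a,b+r]. -/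
/-!
Suppose `p` is positive somewhere and let `M > 0` be its maximum on `[a, b + r]`, attained at
`t₀ ≤ b`. Let `t₁` be the first zero of `p` after `t₀` (there is one, as `p b = 0`). On
`[t₀, t₁]` we have `0 ≤ p ≤ M` and `p ∘ τ ≤ M`, so the differential inequality gives
`-p' ≤ (K₋ + L) M` there, and integrating,
`M = p t₀ - p t₁ ≤ M ∫_{t₀}^{t₁} (K₋ + L) ≤ M ∫_a^b (K₋ + L) < M`.
-/

open MeasureTheory Set

theorem ContinuousOn.exists_eq_zero_forall_nonneg_Icc {p : ℝ → ℝ} {x y : ℝ} (hxy : x ≤ y)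
    (hp : ContinuousOn p (Icc x y)) (hx : 0 ≤ p x) (hy : p y = 0) :
    ∃ z ∈ Icc x y, p z = 0 ∧ ∀ s ∈ Icc x z, 0 ≤ p s := by
  set S := Icc x y ∩ p ⁻¹' {0}
  have hSbdd : BddBelow S := ⟨x, fun s hs => hs.1.1⟩
  have hS : IsClosed S := hp.preimage_isClosed_of_isClosed isClosed_Icc isClosed_singleton
  have hzS : sInf S ∈ S := hS.csInf_mem ⟨y, ⟨hxy, le_rfl⟩, hy⟩ hSbdd
  refine ⟨sInf S, hzS.1, hzS.2, fun s hs => ?_⟩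
  by_contra! hneg
  have hsy : s ≤ y := hs.2.trans hzS.1.2
  obtain ⟨u, hu, hpu⟩ := intermediate_value_Icc' hs.1
    (hp.mono (Icc_subset_Icc_right hsy)) ⟨hneg.le, hx⟩
  have hus : u = s := le_antisymm hu.2 (hs.2.trans (csInf_le hSbdd ⟨⟨hu.1, hu.2.trans hsy⟩, hpu⟩))
  exact hneg.ne (hus ▸ hpu)

theorem sub_eq_intervalIntegral_of_eq_add_intervalIntegral {p p' : ℝ → ℝ} {a b x y : ℝ}
    (hp' : IntegrableOn p' (Icc a b)) (hp : ∀ t ∈ Icc a b, p t = p a + ∫ s in a..t, p' s)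
    (hx : x ∈ Icc a b) (hy : y ∈ Icc a b) :
    p y - p x = ∫ s in x..y, p' s := by
  have hint : ∀ c ∈ Icc a b, IntervalIntegrable p' volume a c := fun c hc =>
    (intervalIntegrable_iff_integrableOn_Icc_of_le hc.1).2 (hp'.mono_set (Icc_subset_Icc_right hc.2))
  rw [hp y hy, hp x hx, ← intervalIntegral.integral_interval_sub_left (hint y hy) (hint x hx)]
  ring

theorem neg_le_max_neg_add_mul_of_mul_sub_mul_le {d k l x y M : ℝ} (h : k * x - l * y ≤ d)
    (hx : 0 ≤ x) (hxM : x ≤ M) (hyM : y ≤ M) (hl : 0 ≤ l) :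
    -d ≤ (max (-k) 0 + l) * M := by
  nlinarith [mul_le_mul_of_nonneg_right (le_max_left (-k) 0) hx,
    mul_le_mul_of_nonneg_left hxM (le_max_right (-k) 0), mul_le_mul_of_nonneg_left hyM hl]

theorem le_intervalIntegral_mul_of_nonneg_Icc {p p' K L τ : ℝ → ℝ} {x y M : ℝ} (hxy : x ≤ y)
    (hp'int : IntegrableOn p' (Icc x y)) (hKint : IntegrableOn K (Icc x y))
    (hLint : IntegrableOn L (Icc x y)) (hLpos : ∀ᵐ s ∂(volume.restrict (Icc x y)), 0 ≤ L s)
    (hineq : ∀ᵐ s ∂(volume.restrict (Icc x y)), K s * p s - L s * p (τ s) ≤ p' s)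
    (hFTC : p y - p x = ∫ s in x..y, p' s) (hy : p y = 0)
    (hnonneg : ∀ s ∈ Icc x y, 0 ≤ p s) (hle : ∀ s ∈ Icc x y, p s ≤ M)
    (hτle : ∀ s ∈ Icc x y, p (τ s) ≤ M) :
    p x ≤ (∫ s in x..y, (max (-K s) 0 + L s)) * M := by
  have hbound : (fun s => -p' s) ≤ᵐ[volume.restrict (Icc x y)]
      fun s => (max (-K s) 0 + L s) * M := by
    filter_upwards [hineq, hLpos, ae_restrict_mem measurableSet_Icc] with s hs hLs hsI
    exact neg_le_max_neg_add_mul_of_mul_sub_mul_le hs (hnonneg s hsI) (hle s hsI) (hτle s hsI) hLs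
  calc p x = ∫ s in x..y, -p' s := by rw [intervalIntegral.integral_neg, ← hFTC, hy]; ring
    _ ≤ ∫ s in x..y, (max (-K s) 0 + L s) * M :=
      intervalIntegral.integral_mono_ae_restrict hxy
        ((intervalIntegrable_iff_integrableOn_Icc_of_le hxy).2 hp'int.neg)
        ((intervalIntegrable_iff_integrableOn_Icc_of_le hxy).2
          ((hKint.neg.pos_part.add hLint).mul_const M)) hbound
    _ = (∫ s in x..y, (max (-K s) 0 + L s)) * M := intervalIntegral.integral_mul_const M _

/-- Absolute continuity of `p` on `[a,b]` is expressed by the representation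
`p t = p a + ∫_a^t p'`. -/
theorem stmt_8_general (a b r : ℝ) (hr : 0 ≤ r)
    (τ : ℝ → ℝ)
    (hτrange : ∀ t ∈ Set.Icc a b, τ t ∈ Set.Icc a (b + r))
    (p p' K L : ℝ → ℝ)
    (hpcont : ContinuousOn p (Set.Icc a (b + r)))
    (hp'int : IntegrableOn p' (Set.Icc a b))
    (hpAC : ∀ t ∈ Set.Icc a b, p t = p a + ∫ s in a..t, p' s)
    (hKint : IntegrableOn K (Set.Icc a b))
    (hLint : IntegrableOn L (Set.Icc a b))
    (hLpos : ∀ᵐ t ∂(volume.restrict (Set.Icc a b)), 0 ≤ L t)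
    (hineq : ∀ᵐ t ∂(volume.restrict (Set.Icc a b)),
      p' t ≥ K t * p t - L t * p (τ t))
    (hfinal : ∀ t ∈ Set.Icc b (b + r), p t = 0)
    (hint : (∫ t in a..b, (max (-K t) 0 + L t)) < 1) :
    ∀ t ∈ Set.Icc a (b + r), p t ≤ 0 := by
  intro t ht
  by_contra! hpt
  have hbr : b ≤ b + r := le_add_of_nonneg_right hr
  obtain ⟨t₀, ht₀, hmax⟩ := isCompact_Icc.exists_isMaxOn ⟨t, ht⟩ hpcont
  have hM : 0 < p t₀ := hpt.trans_le (hmax ht)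
  have ht₀b : t₀ ≤ b := not_lt.1 fun h => hM.ne' (hfinal t₀ ⟨h.le, ht₀.2⟩)
  obtain ⟨t₁, ht₁, hpt₁, hnonneg⟩ := ContinuousOn.exists_eq_zero_forall_nonneg_Icc ht₀b
    (hpcont.mono (Icc_subset_Icc ht₀.1 hbr)) hM.le (hfinal b ⟨le_rfl, hbr⟩)
  have hab : a ≤ b := ht₀.1.trans ht₀b
  have hsub : Icc t₀ t₁ ⊆ Icc a b := Icc_subset_Icc ht₀.1 ht₁.2
  have hF : 0 ≤ᵐ[volume.restrict (Ioc a b)] fun s => max (-K s) 0 + L s := by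
    filter_upwards [ae_restrict_of_ae_restrict_of_subset Ioc_subset_Icc_self hLpos] with s hs
    exact add_nonneg (le_max_right _ _) hs
  have hlocal : p t₀ ≤ (∫ s in t₀..t₁, (max (-K s) 0 + L s)) * p t₀ :=
    le_intervalIntegral_mul_of_nonneg_Icc ht₁.1 (hp'int.mono_set hsub) (hKint.mono_set hsub)
      (hLint.mono_set hsub) (ae_restrict_of_ae_restrict_of_subset hsub hLpos)
      (ae_restrict_of_ae_restrict_of_subset hsub hineq)
      (sub_eq_intervalIntegral_of_eq_add_intervalIntegral hp'int hpAC ⟨ht₀.1, ht₀b⟩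
        (hsub ⟨ht₁.1, le_rfl⟩))
      hpt₁ hnonneg (fun s hs => hmax (Icc_subset_Icc le_rfl hbr (hsub hs)))
      (fun s hs => hmax (hτrange s (hsub hs)))
  have hmono : ∫ s in t₀..t₁, (max (-K s) 0 + L s) ≤ ∫ s in a..b, (max (-K s) 0 + L s) :=
    intervalIntegral.integral_mono_interval ht₀.1 ht₁.1 ht₁.2 hF
      ((intervalIntegrable_iff_integrableOn_Icc_of_le hab).2 (hKint.neg.pos_part.add hLint))
  exact (hlocal.trans (mul_le_mul_of_nonneg_right hmono hM.le)).not_gt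
    (mul_lt_of_lt_one_left hM hint)

/-- Maximum principle for problems with advanced argument. Absolute continuity of `p` on
`[a,b]` is expressed by the fundamental-theorem-of-calculus representation
`p t = p a + ∫_a^t p'`. -/
theorem stmt_8 (a b r : ℝ) (hab : a ≤ b) (hr : 0 ≤ r)
    (τ : ℝ → ℝ) (hτmeas : Measurable τ)
    (hτrange : ∀ t ∈ Set.Icc a b, τ t ∈ Set.Icc a (b + r))
    (hτadv : ∀ᵐ t ∂(volume.restrict (Set.Icc a b)), t ≤ τ t)
    (p p' K L : ℝ → ℝ)
    (hpcont : ContinuousOn p (Set.Icc a (b + r)))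
    (hp'int : IntegrableOn p' (Set.Icc a b))
    (hpAC : ∀ t ∈ Set.Icc a b, p t = p a + ∫ s in a..t, p' s)
    (hKint : IntegrableOn K (Set.Icc a b))
    (hLint : IntegrableOn L (Set.Icc a b))
    (hLpos : ∀ᵐ t ∂(volume.restrict (Set.Icc a b)), 0 ≤ L t)
    (hineq : ∀ᵐ t ∂(volume.restrict (Set.Icc a b)),
      p' t ≥ K t * p t - L t * p (τ t))
    (hfinal : ∀ t ∈ Set.Icc b (b + r), p t = 0)
    (hint : (∫ t in a..b, (max (-K t) 0 + L t)) < 1) :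
    ∀ t ∈ Set.Icc a (b + r), p t ≤ 0 :=
  stmt_8_general a b r hr τ hτrange p p' K L hpcont hp'int hpAC hKint hLint hLpos hineq hfinal hint
end

section
/- Coupled fixed point theorem for multivalued operators: Let Y be a subset of an ordered metric space X, [α,β] a nonempty closed order interval in Y, and 𝒜 : [α,β] × [α,β] → 2^{[α,β]} \ {∅} a multivalued operator. Suppose that for all v, w ∈ [α,β] the minimum A₊(v,w) = min 𝒜(v,w) and maximum A*(v,w) = max 𝒜(v,w) exist in [α,β], and that the single-valued operators A₊ and A* are mixed monotone and satisfy the mixed monotone convergence property. Then 𝒜 has extremal coupled fixed points v₊, w* in [α,β], characterized by (v₊, w*) = min_⪯ {(v,w) : A₊(v,w) ≤ v and A*(w,v) ≥ w}, where (v,w) ⪯ (v̄,w̄) iff v ≤ v̄ and w ≥ w̄. -/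
/-!
On `X × Xᵒᵈ` the map `T (v, w) = (A₊(v, w), A*(w, v))` is a monotone self-map of `[α,β]²`, the
coupled quasi-fixed points are its prefixed points `T x ≤ x`, and every coupled fixed point of `𝒜`
is one of them. Zorn's lemma applied to the pairs `x ≤ T x` lying below every prefixed point gives
a maximal such pair, which is then a fixed point of `T` and the least prefixed point. Chains have
upper bounds because of the metric: along a chain the values of `T` become arbitrarily close
(otherwise one builds a monotone sequence on which `T` diverges), so a suitable monotone sequence
in the chain carries `T` to the supremum of `T` over the chain.
-/

open Filter Topology Set Function OrderDual

theorem exists_forall_dist_lt_of_tendsto {α M : Type*} [Preorder α] [PseudoMetricSpace M]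
    {C : Set α} {g : α → M} (hne : C.Nonempty)
    (hconv : ∀ u : ℕ → α, (∀ n, u n ∈ C) → Monotone u → ∃ L, Tendsto (g ∘ u) atTop (𝓝 L))
    {ε : ℝ} (hε : 0 < ε) : ∃ p ∈ C, ∀ q ∈ C, p ≤ q → dist (g q) (g p) < ε := by
  by_contra! h
  choose! f hfC hle hdist using h
  obtain ⟨p₀, hp₀⟩ := hne
  have huC : ∀ n, f^[n] p₀ ∈ C := by
    intro n
    induction n with
    | zero => exact hp₀
    | succ n ih => rw [iterate_succ_apply']; exact hfC _ ih
  have hmono : Monotone fun n => f^[n] p₀ := monotone_nat_of_le_succ fun n => by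
    rw [iterate_succ_apply']; exact hle _ (huC n)
  obtain ⟨L, hL⟩ := hconv _ huC hmono
  have hsucc : Tendsto (fun n => dist (g (f^[n + 1] p₀)) (g (f^[n] p₀))) atTop (𝓝 0) := by
    simpa using (hL.comp (tendsto_add_atTop_nat 1)).dist hL
  obtain ⟨n, hn⟩ := (hsucc.eventually_lt_const hε).exists
  rw [iterate_succ_apply'] at hn
  exact (hdist _ (huC n)).not_gt hn

theorem IsChain.exists_monotone_tendsto {α M : Type*} [Preorder α] [MetricSpace M]
    {C : Set α} {g : α → M} (hC : IsChain (· ≤ ·) C) (hne : C.Nonempty)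
    (hconv : ∀ u : ℕ → α, (∀ n, u n ∈ C) → Monotone u → ∃ L, Tendsto (g ∘ u) atTop (𝓝 L)) :
    ∃ u : ℕ → α, (∀ n, u n ∈ C) ∧ Monotone u ∧ ∃ L, Tendsto (g ∘ u) atTop (𝓝 L) ∧
      ∀ x ∈ C, (∃ n, x ≤ u n) ∨ g x = L := by
  choose p hpC hp using fun k : ℕ =>
    exists_forall_dist_lt_of_tendsto hne hconv (Nat.one_div_pos_of_nat (n := k))
  have hdir : Directed (· ≤ ·) p :=
    directedOn_range.1 (hC.mono (range_subset_iff.2 hpC)).directedOn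
  set u := p ∘ hdir.sequence p
  have huC : ∀ n, u n ∈ C := fun n => hpC _
  have hmono : Monotone u := hdir.sequence_mono
  have hpu : ∀ k, p k ≤ u (k + 1) := fun k => by
    have := hdir.le_sequence k
    rwa [Encodable.encode_nat] at this
  obtain ⟨L, hL⟩ := hconv u huC hmono
  refine ⟨u, huC, hmono, L, hL, fun x hx => or_iff_not_imp_left.2 fun hnot => ?_⟩
  push Not at hnot
  have hux : ∀ n, u n ≤ x := fun n => (hC.total (huC n) hx).resolve_right (hnot n)
  refine tendsto_nhds_unique (Metric.tendsto_atTop.2 fun ε hε => ?_) hL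
  obtain ⟨k, hk⟩ := exists_nat_one_div_lt (half_pos hε)
  refine ⟨k + 1, fun n hn => ?_⟩
  have hpk : p k ≤ u n := (hpu k).trans (hmono hn)
  have hun := hp k (u n) (huC n) hpk
  have hx' := hp k x hx (hpk.trans (hux n))
  calc dist (g (u n)) (g x) ≤ dist (g (u n)) (g (p k)) + dist (g x) (g (p k)) :=
        dist_triangle_right _ _ _
    _ < ε := by linarith

theorem IsChain.exists_isLUB_image_of_tendsto {α β : Type*} [Preorder α] [Preorder β]
    [MetricSpace β] [ClosedIciTopology β] [ClosedIicTopology β] {c : Set α}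
    (hc : IsChain (· ≤ ·) c) (hne : c.Nonempty) {g : α → β} (hg : MonotoneOn g c)
    (hconv : ∀ u : ℕ → α, (∀ n, u n ∈ c) → Monotone u → ∃ L, Tendsto (g ∘ u) atTop (𝓝 L)) :
    ∃ L ∈ closure (g '' c), IsLUB (g '' c) L := by
  obtain ⟨u, huc, hmono, L, hL, hcof⟩ := hc.exists_monotone_tendsto hne hconv
  have hgu : ∀ n, g (u n) ≤ L := fun n =>
    ge_of_tendsto hL (eventually_atTop.2 ⟨n, fun _ hm => hg (huc n) (huc _) (hmono hm)⟩)
  refine ⟨L, mem_closure_of_tendsto hL (Eventually.of_forall fun n => mem_image_of_mem g (huc n)),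
    ?_, fun q hq => le_of_tendsto' hL fun n => hq (mem_image_of_mem g (huc n))⟩
  rintro _ ⟨x, hx, rfl⟩
  rcases hcof x hx with ⟨n, hxu⟩ | hxL
  · exact (hg hx (huc n) hxu).trans (hgu n)
  · exact hxL.le

theorem exists_isLeast_isFixedPt_of_tendsto {α : Type*} [PartialOrder α] [MetricSpace α]
    [ClosedIciTopology α] [ClosedIicTopology α] {K : Set α} (hK : IsClosed K) {a : α}
    (ha : IsLeast K a) {T : α → α} (hmaps : MapsTo T K K) (hmono : MonotoneOn T K)
    (hconv : ∀ u : ℕ → α, (∀ n, u n ∈ K) → Monotone u → ∃ L, Tendsto (T ∘ u) atTop (𝓝 L)) :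
    ∃ m, IsLeast {x ∈ K | T x ≤ x} m ∧ IsFixedPt T m := by
  set E := {x ∈ K | x ≤ T x ∧ x ∈ lowerBounds {x ∈ K | T x ≤ x}}
  have haE : a ∈ E := ⟨ha.1, ha.2 (hmaps ha.1), fun q hq => ha.2 hq.1⟩
  have hTE : ∀ x ∈ E, T x ∈ E := fun x ⟨hxK, hxT, hxD⟩ =>
    ⟨hmaps hxK, hmono hxK (hmaps hxK) hxT, fun q hq => (hmono hxK hq.1 (hxD hq)).trans hq.2⟩
  have hchain : ∀ c ⊆ E, IsChain (· ≤ ·) c → ∀ y ∈ c, ∃ ub ∈ E, ∀ z ∈ c, z ≤ ub := by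
    intro c hcE hc y hy
    have hcK : c ⊆ K := fun x hx => (hcE hx).1
    obtain ⟨L, hLcl, hLub, hLlub⟩ := hc.exists_isLUB_image_of_tendsto ⟨y, hy⟩
      (hmono.mono hcK) fun u hu => hconv u fun n => hcK (hu n)
    have hLK : L ∈ K := closure_minimal (image_subset_iff.2 fun x hx => hmaps (hcK hx)) hK hLcl
    have hxL : ∀ x ∈ c, x ≤ L := fun x hx => (hcE hx).2.1.trans (hLub (mem_image_of_mem T hx))
    refine ⟨L, ⟨hLK, hLlub ?_, fun q hq => hLlub ?_⟩, hxL⟩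
    · rintro _ ⟨x, hx, rfl⟩
      exact hmono (hcK hx) hLK (hxL x hx)
    · rintro _ ⟨x, hx, rfl⟩
      exact (hmono (hcK hx) hq.1 ((hcE hx).2.2 hq)).trans hq.2
  obtain ⟨m, -, hmE, hmax⟩ := zorn_le_nonempty₀ E hchain a haE
  have hfix : T m = m := le_antisymm (hmax (hTE m hmE) hmE.2.1) hmE.2.1
  exact ⟨m, ⟨⟨hmE.1, hfix.le⟩, hmE.2.2⟩, hfix⟩

section Coupled

variable {X : Type*} [Preorder X]

def MixedMonotoneOn (S : Set X) (f : X → X → X) : Prop :=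
  ∀ v ∈ S, ∀ v' ∈ S, ∀ w ∈ S, ∀ w' ∈ S, (v ≤ v' → f v w ≤ f v' w) ∧ (w ≤ w' → f v w' ≤ f v w)

def MixedMonotoneConvergenceOn [TopologicalSpace X] (S : Set X) (f : X → X → X) : Prop :=
  ∀ vs ws : ℕ → X, (∀ j, vs j ∈ S) → (∀ j, ws j ∈ S) →
    ((Monotone vs ∧ Antitone ws) ∨ (Antitone vs ∧ Monotone ws)) →
    ∃ z : X, Tendsto (fun j => f (vs j) (ws j)) atTop (𝓝 z)

/-- The pair `(v, w)` is encoded as `(v, toDual w)`, so that `≤` on `X × Xᵒᵈ` is the order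
`(v, w) ⪯ (v', w') ↔ v ≤ v' ∧ w' ≤ w`. -/
def coupledMap (Amin Amax : X → X → X) (p : X × Xᵒᵈ) : X × Xᵒᵈ :=
  (Amin p.1 (ofDual p.2), toDual (Amax (ofDual p.2) p.1))

theorem MixedMonotoneOn.le {S : Set X} {f : X → X → X} (hf : MixedMonotoneOn S f)
    {v v' w w' : X} (hv : v ∈ S) (hv' : v' ∈ S) (hw : w ∈ S) (hw' : w' ∈ S)
    (hvv' : v ≤ v') (hw'w : w' ≤ w) : f v w ≤ f v' w' :=
  ((hf v hv v' hv' w hw w hw).1 hvv').trans ((hf v' hv' v' hv' w' hw' w hw).2 hw'w)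

theorem coupledMap_le_iff {Amin Amax : X → X → X} {v w : X} :
    coupledMap Amin Amax (v, toDual w) ≤ (v, toDual w) ↔ Amin v w ≤ v ∧ w ≤ Amax w v :=
  Prod.mk_le_mk.trans (and_congr_right' toDual_le_toDual)

theorem MixedMonotoneOn.monotoneOn_coupledMap {S : Set X} {Amin Amax : X → X → X}
    (hmin : MixedMonotoneOn S Amin) (hmax : MixedMonotoneOn S Amax) :
    MonotoneOn (coupledMap Amin Amax) (S ×ˢ (ofDual ⁻¹' S)) := fun _ hp _ hq hpq =>
  Prod.mk_le_mk.2 ⟨hmin.le hp.1 hq.1 hp.2 hq.2 hpq.1 (ofDual_le_ofDual.2 hpq.2),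
    toDual_le_toDual.2 (hmax.le hq.2 hp.2 hq.1 hp.1 (ofDual_le_ofDual.2 hpq.2) hpq.1)⟩

theorem MixedMonotoneConvergenceOn.exists_tendsto_coupledMap [TopologicalSpace X] {S : Set X}
    {Amin Amax : X → X → X} (hmin : MixedMonotoneConvergenceOn S Amin)
    (hmax : MixedMonotoneConvergenceOn S Amax) {u : ℕ → X × Xᵒᵈ}
    (hu : ∀ n, u n ∈ S ×ˢ (ofDual ⁻¹' S)) (hmono : Monotone u) :
    ∃ L, Tendsto (coupledMap Amin Amax ∘ u) atTop (𝓝 L) := by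
  have hfst : Monotone fun n => (u n).1 := fun _ _ h => (hmono h).1
  have hsnd : Antitone fun n => ofDual (u n).2 := fun _ _ h => (hmono h).2
  obtain ⟨z, hz⟩ := hmin _ _ (fun n => (hu n).1) (fun n => (hu n).2) (.inl ⟨hfst, hsnd⟩)
  obtain ⟨y, hy⟩ := hmax _ _ (fun n => (hu n).2) (fun n => (hu n).1) (.inr ⟨hsnd, hfst⟩)
  exact ⟨(z, toDual y), hz.prodMk_nhds hy⟩

end Coupled

/-- Coupled fixed point theorem for multivalued operators on an ordered metric space
(a metric space with a partial order whose order intervals `[x)` and `(x]` are closed).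
`S` is the closed order interval `[α,β]` inside `Y`; `Amin v w` and `Amax v w` are the
minimum and maximum of `Aop v w`; both are mixed monotone and satisfy the mixed monotone
convergence property. Then `Aop` has extremal coupled fixed points `vmin, wmax` in `S`,
characterized as the `⪯`-minimum of `{(v,w) : Amin v w ≤ v, w ≤ Amax w v}` where
`(v,w) ⪯ (v',w') ↔ v ≤ v' ∧ w' ≤ w`. -/
theorem stmt_10 {X : Type*} [MetricSpace X] [PartialOrder X]
    (hclosed : ∀ x : X, IsClosed (Set.Ici x) ∧ IsClosed (Set.Iic x))
    (Y : Set X) (α β : X) (hαβY : α ∈ Y ∧ β ∈ Y)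
    (S : Set X) (hS : S = {y ∈ Y | α ≤ y ∧ y ≤ β})
    (hSne : S.Nonempty) (hSclosed : IsClosed S)
    (Aop : X → X → Set X)
    (hAop : ∀ v ∈ S, ∀ w ∈ S, (Aop v w).Nonempty ∧ Aop v w ⊆ S)
    (Amin Amax : X → X → X)
    (hmin : ∀ v ∈ S, ∀ w ∈ S, Amin v w ∈ Aop v w ∧ ∀ z ∈ Aop v w, Amin v w ≤ z)
    (hmax : ∀ v ∈ S, ∀ w ∈ S, Amax v w ∈ Aop v w ∧ ∀ z ∈ Aop v w, z ≤ Amax v w)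
    (hmonoMin : ∀ v ∈ S, ∀ v' ∈ S, ∀ w ∈ S, ∀ w' ∈ S,
      (v ≤ v' → Amin v w ≤ Amin v' w) ∧ (w ≤ w' → Amin v w' ≤ Amin v w))
    (hmonoMax : ∀ v ∈ S, ∀ v' ∈ S, ∀ w ∈ S, ∀ w' ∈ S,
      (v ≤ v' → Amax v w ≤ Amax v' w) ∧ (w ≤ w' → Amax v w' ≤ Amax v w))
    (hmmcpMin : ∀ vs ws : ℕ → X, (∀ j, vs j ∈ S) → (∀ j, ws j ∈ S) →
      ((Monotone vs ∧ Antitone ws) ∨ (Antitone vs ∧ Monotone ws)) →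
      ∃ z : X, Tendsto (fun j => Amin (vs j) (ws j)) atTop (𝓝 z))
    (hmmcpMax : ∀ vs ws : ℕ → X, (∀ j, vs j ∈ S) → (∀ j, ws j ∈ S) →
      ((Monotone vs ∧ Antitone ws) ∨ (Antitone vs ∧ Monotone ws)) →
      ∃ z : X, Tendsto (fun j => Amax (vs j) (ws j)) atTop (𝓝 z)) :
    ∃ vmin ∈ S, ∃ wmax ∈ S,
      -- coupled fixed points
      vmin ∈ Aop vmin wmax ∧ wmax ∈ Aop wmax vmin ∧
      -- extremality among coupled fixed points
      (∀ v ∈ S, ∀ w ∈ S, v ∈ Aop v w → w ∈ Aop w v → vmin ≤ v ∧ w ≤ wmax) ∧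
      -- characterization: (vmin, wmax) is the ⪯-minimum of the coupled quasi-fixed-point set
      (Amin vmin wmax ≤ vmin ∧ wmax ≤ Amax wmax vmin) ∧
      (∀ v ∈ S, ∀ w ∈ S, Amin v w ≤ v → w ≤ Amax w v → vmin ≤ v ∧ w ≤ wmax) := by
  -- Built by hand: the metric topology of `Xᵒᵈ` is not reducibly its order-dual topology.
  have : ClosedIciTopology (X × Xᵒᵈ) := ⟨fun p => by
    rw [Ici_prod_eq]; exact (hclosed p.1).1.prod (hclosed (ofDual p.2)).2⟩
  have : ClosedIicTopology (X × Xᵒᵈ) := ⟨fun p => by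
    rw [Iic_prod_eq]; exact (hclosed p.1).2.prod (hclosed (ofDual p.2)).1⟩
  have hmemS : ∀ y ∈ S, α ≤ y ∧ y ≤ β := fun y hy => (hS ▸ hy).2
  obtain ⟨y₀, hy₀⟩ := hSne
  have hαβ : α ≤ β := (hmemS y₀ hy₀).1.trans (hmemS y₀ hy₀).2
  have hbot : IsLeast (S ×ˢ (ofDual ⁻¹' S)) (α, toDual β) :=
    ⟨⟨hS ▸ ⟨hαβY.1, le_rfl, hαβ⟩, hS ▸ ⟨hαβY.2, hαβ, le_rfl⟩⟩,
      fun p hp => Prod.mk_le_mk.2 ⟨(hmemS _ hp.1).1, toDual_le.2 (hmemS _ hp.2).2⟩⟩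
  have hmaps : MapsTo (coupledMap Amin Amax) (S ×ˢ (ofDual ⁻¹' S)) (S ×ˢ (ofDual ⁻¹' S)) :=
    fun _ ⟨h1, h2⟩ =>
      ⟨(hAop _ h1 _ h2).2 (hmin _ h1 _ h2).1, (hAop _ h2 _ h1).2 (hmax _ h2 _ h1).1⟩
  obtain ⟨m, ⟨⟨hmK, -⟩, hleast⟩, hfix⟩ := exists_isLeast_isFixedPt_of_tendsto
    (hSclosed.prod hSclosed : IsClosed (S ×ˢ (ofDual ⁻¹' S))) hbot hmaps
    (MixedMonotoneOn.monotoneOn_coupledMap hmonoMin hmonoMax)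
    fun _ hu hmono =>
      MixedMonotoneConvergenceOn.exists_tendsto_coupledMap hmmcpMin hmmcpMax hu hmono
  have hvfix : Amin m.1 (ofDual m.2) = m.1 := congrArg Prod.fst hfix
  have hwfix : Amax (ofDual m.2) m.1 = ofDual m.2 := congrArg (ofDual ∘ Prod.snd) hfix
  have hquasi : ∀ v ∈ S, ∀ w ∈ S, Amin v w ≤ v → w ≤ Amax w v → m.1 ≤ v ∧ w ≤ ofDual m.2 :=
    fun v hv w hw hvq hwq =>
      Prod.le_def.1 (hleast (a := (v, toDual w)) ⟨⟨hv, hw⟩, coupledMap_le_iff.2 ⟨hvq, hwq⟩⟩)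
  refine ⟨m.1, hmK.1, ofDual m.2, hmK.2, ?_, ?_, fun v hv w hw hvA hwA => ?_,
    ⟨hvfix.le, hwfix.ge⟩, hquasi⟩
  · simpa only [hvfix] using (hmin m.1 hmK.1 (ofDual m.2) hmK.2).1
  · simpa only [hwfix] using (hmax (ofDual m.2) hmK.2 m.1 hmK.1).1
  · exact hquasi v hv w hw ((hmin v hv w hw).2 v hvA) ((hmax w hw v hv).2 w hwA)
end
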